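/- arXiv:2111.07569 — 2 statements merged into one kernel-verified Lean document; each statement's English description precedes it below -/
import Mathlib

section
/- Let h(r) = r or h(r) = 1/r. If G(r,t) = (u(r,t), v(r,t)) is a C¹ diffeomorphism of the right half plane satisfying the Cauchy–Riemann equations u_r h(r) = v_t h(u) and u_t = −h(r)h(u)v_r, together with the isometry condition G*g_h = g_h for g_h = dr² + (1/h²)dt², then G(r,t) = (r, t + l) for some constant l ∈ ℝ. -/
set_option maxHeartbeats 1000000 in
/-- Let `h(r) = r` or `h(r) = 1/r`. If `G(r,t) = (u(r,t), v(r,t))` is a C¹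
diffeomorphism of the right half plane satisfying the Cauchy–Riemann equations
`u_r h(r) = v_t h(u)`, `u_t = −h(r)h(u)v_r`, and the isometry condition
`G*g_h = g_h` for `g_h = dr² + (1/h²)dt²`, then `G(r,t) = (r, t + l)` for some `l ∈ ℝ`. -/
theorem stmt_9 (h : ℝ → ℝ) (hh : h = (fun r => r) ∨ h = fun r => 1 / r)
    (u v u_r u_t v_r v_t : ℝ → ℝ → ℝ)
    (hmaps : ∀ r t : ℝ, 0 < r → 0 < u r t)
    (hbij : Set.BijOn (fun p : ℝ × ℝ => (u p.1 p.2, v p.1 p.2))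
      {p : ℝ × ℝ | 0 < p.1} {p : ℝ × ℝ | 0 < p.1})
    (hur : ∀ r t : ℝ, 0 < r → HasDerivAt (fun x => u x t) (u_r r t) r)
    (hut : ∀ r t : ℝ, 0 < r → HasDerivAt (fun y => u r y) (u_t r t) t)
    (hvr : ∀ r t : ℝ, 0 < r → HasDerivAt (fun x => v x t) (v_r r t) r)
    (hvt : ∀ r t : ℝ, 0 < r → HasDerivAt (fun y => v r y) (v_t r t) t)
    (hcont : ContinuousOn
      (fun p : ℝ × ℝ => (u_r p.1 p.2, u_t p.1 p.2, v_r p.1 p.2, v_t p.1 p.2))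
      {p : ℝ × ℝ | 0 < p.1})
    (hCR1 : ∀ r t : ℝ, 0 < r → u_r r t * h r = v_t r t * h (u r t))
    (hCR2 : ∀ r t : ℝ, 0 < r → u_t r t = -(h r) * h (u r t) * v_r r t)
    (hiso1 : ∀ r t : ℝ, 0 < r →
      (u_r r t) ^ 2 + (1 / (h (u r t)) ^ 2) * (v_r r t) ^ 2 = 1)
    (hiso2 : ∀ r t : ℝ, 0 < r →
      (u_t r t) ^ 2 + (1 / (h (u r t)) ^ 2) * (v_t r t) ^ 2 = 1 / (h r) ^ 2)
    (hiso3 : ∀ r t : ℝ, 0 < r →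
      u_r r t * u_t r t + (1 / (h (u r t)) ^ 2) * v_r r t * v_t r t = 0) :
    ∃ l : ℝ, ∀ r t : ℝ, 0 < r → u r t = r ∧ v r t = t + l := by
  -- Basic facts about h
  have hpos : ∀ x : ℝ, 0 < x → 0 < h x := by
    rcases hh with rfl | rfl <;> intro x hx <;> simp only <;> positivity
  have heq2 : ∀ x y : ℝ, 0 < x → 0 < y → h x ^ 2 = h y ^ 2 → x = y := by
    rcases hh with rfl | rfl <;> intro x y hx hy hxy <;> simp only at hxy
    · nlinarith
    · field_simp at hxy; nlinarith
  have hinv2 : ∀ x y : ℝ, 0 < x → 0 < y → h x ^ 2 * h y ^ 2 = 1 → x * y = 1 := by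
    rcases hh with rfl | rfl <;> intro x y hx hy hxy <;> simp only at hxy
    · nlinarith [mul_pos hx hy]
    · field_simp at hxy; nlinarith [mul_pos hx hy]
  have hone : ∀ x : ℝ, 0 < x → h x ^ 2 = 1 → x = 1 := by
    rcases hh with rfl | rfl <;> intro x hx hx2 <;> simp only at hx2
    · nlinarith
    · field_simp at hx2; nlinarith
  -- pointwise algebraic lemmas
  have keyA : ∀ r t : ℝ, 0 < r → u_t r t = 0 → u r t = r := by
    intro r t hr hb
    have hk := hpos r hr
    have hH := hpos _ (hmaps r t hr)
    have hc : v_r r t = 0 := by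
      have h2 := hCR2 r t hr
      rw [hb] at h2
      rcases mul_eq_zero.mp h2.symm with h3 | h3
      · exact absurd h3 (by nlinarith)
      · exact h3
    have i1 := hiso1 r t hr
    rw [hc] at i1
    have ha2 : u_r r t ^ 2 = 1 := by
      simpa using i1
    have i2 := hiso2 r t hr
    rw [hb] at i2
    have e1 := hCR1 r t hr
    have A : v_t r t ^ 2 * h r ^ 2 = h (u r t) ^ 2 := by
      field_simp at i2
      nlinarith [i2]
    have B : v_t r t ^ 2 * h (u r t) ^ 2 = h r ^ 2 := by
      linear_combination (-(v_t r t * h (u r t) + u_r r t * h r)) * e1 + h r ^ 2 * ha2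
    have hd4 : (v_t r t ^ 2 * v_t r t ^ 2 - 1) * h r ^ 2 = 0 := by
      linear_combination v_t r t ^ 2 * A + B
    have hd4' : v_t r t ^ 2 * v_t r t ^ 2 = 1 := by
      rcases mul_eq_zero.mp hd4 with h5 | h5
      · linarith
      · nlinarith
    have hd2 : v_t r t ^ 2 = 1 := by nlinarith [sq_nonneg (v_t r t), hd4']
    exact heq2 _ _ (hmaps r t hr) hr (by linear_combination -A + h r ^ 2 * hd2)
  have keyB : ∀ r t : ℝ, 0 < r → u_r r t = 0 → u r t * r = 1 := by
    intro r t hr ha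
    have hk := hpos r hr
    have hH := hpos _ (hmaps r t hr)
    have e1 := hCR1 r t hr
    rw [ha] at e1
    have hd : v_t r t = 0 := by
      have h3 : v_t r t * h (u r t) = 0 := by linarith [e1]
      rcases mul_eq_zero.mp h3 with h4 | h4
      · exact h4
      · exact absurd h4 (ne_of_gt hH)
    have i2 := hiso2 r t hr
    rw [hd] at i2
    have hb2 : u_t r t ^ 2 * h r ^ 2 = 1 := by
      field_simp at i2
      have hH2 : 0 < h (u r t) ^ 2 := by positivity
      exact mul_right_cancel₀ (ne_of_gt hH2) (by linear_combination i2)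
    have e2 := hCR2 r t hr
    have hb2' : u_t r t ^ 2 = h r ^ 2 * h (u r t) ^ 2 * v_r r t ^ 2 := by
      linear_combination (u_t r t - h r * h (u r t) * v_r r t) * e2
    have i1 := hiso1 r t hr
    rw [ha] at i1
    have hc2 : v_r r t ^ 2 = h (u r t) ^ 2 := by
      field_simp at i1
      nlinarith [i1]
    have hk4 : (h (u r t) ^ 2 * h r ^ 2) * (h (u r t) ^ 2 * h r ^ 2) = 1 := by
      linear_combination hb2 - h r ^ 2 * hb2' - h r ^ 4 * h (u r t) ^ 2 * hc2
    have hXpos : 0 < h (u r t) ^ 2 * h r ^ 2 := by positivity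
    have : h (u r t) ^ 2 * h r ^ 2 = 1 := by nlinarith [hk4, hXpos]
    exact hinv2 _ _ (hmaps r t hr) hr this
  have keyC : ∀ r t : ℝ, 0 < r →
      u_r r t * u_t r t * (h (u r t) ^ 2 - 1) * (h (u r t) ^ 2 + 1) = 0 := by
    intro r t hr
    have hk := hpos r hr
    have hH := hpos _ (hmaps r t hr)
    have e1 := hCR1 r t hr
    have e2 : h r * h (u r t) * v_r r t = -(u_t r t) := by linarith [hCR2 r t hr]
    have i3 := hiso3 r t hr
    have e3 : u_r r t * u_t r t * h (u r t) ^ 2 + v_r r t * v_t r t = 0 := by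
      field_simp at i3
      linarith [i3]
    have e4 : (v_r r t * v_t r t * h (u r t) ^ 2) * h r = -(u_r r t * u_t r t) * h r := by
      linear_combination v_t r t * h (u r t) * e2 + u_t r t * e1
    have e5 : v_r r t * v_t r t * h (u r t) ^ 2 = -(u_r r t * u_t r t) := by
      exact mul_right_cancel₀ (ne_of_gt hk) e4
    linear_combination h (u r t) ^ 2 * e3 - e5
  -- trichotomy
  have keyD : ∀ r t : ℝ, 0 < r → u_r r t ≠ 0 → u_t r t ≠ 0 → u r t = 1 := by
    intro r t hr ha hb
    refine hone _ (hmaps r t hr) ?_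
    have hH := hpos _ (hmaps r t hr)
    have hC := keyC r t hr
    have h1 : h (u r t) ^ 2 - 1 = 0 := by
      rcases mul_eq_zero.mp hC with h2 | h2
      · rcases mul_eq_zero.mp h2 with h3 | h3
        · exact absurd h3 (mul_ne_zero ha hb)
        · exact h3
      · exact absurd h2 (by nlinarith)
    linarith
  have tri : ∀ r t : ℝ, 0 < r → u r t = r ∨ u r t * r = 1 ∨ u r t = 1 := by
    intro r t hr
    by_cases hb : u_t r t = 0
    · exact Or.inl (keyA r t hr hb)
    by_cases ha : u_r r t = 0
    · exact Or.inr (Or.inl (keyB r t hr ha))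
    · exact Or.inr (Or.inr (keyD r t hr ha hb))
  -- the connectedness (slice) argument
  have slice : ∀ t : ℝ, ∀ s : Set ℝ, IsOpen s → IsPreconnected s →
      (∀ x ∈ s, 0 < x ∧ x ≠ 1) → ∀ r ∈ s, u r t = r := by
    intro t s hso hsc hsub r hrs
    have hx0 : ∀ x ∈ s, 0 < x := fun x hx => (hsub x hx).1
    have hx1 : ∀ x ∈ s, x ≠ 1 := fun x hx => (hsub x hx).2
    have hrpos := hx0 r hrs
    by_contra hne
    have hcf : ContinuousOn (fun x => u x t) s := fun x hx =>
      ((hur x t (hx0 x hx)).continuousAt).continuousWithinAt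
    have op : ∀ g : ℝ → ℝ, ContinuousOn g s → IsOpen (s ∩ g ⁻¹' {(1 : ℝ)}ᶜ) := fun g hg =>
      hg.isOpen_inter_preimage hso isOpen_compl_singleton
    set S1 : Set ℝ := s ∩ (fun x => u x t - x + 1) ⁻¹' {(1 : ℝ)}ᶜ with hS1
    set S2 : Set ℝ := s ∩ (fun x => u x t * x) ⁻¹' {(1 : ℝ)}ᶜ with hS2
    set S3 : Set ℝ := s ∩ (fun x => u x t) ⁻¹' {(1 : ℝ)}ᶜ with hS3
    have o1 : IsOpen S1 := op _ ((hcf.sub continuousOn_id).add continuousOn_const)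
    have o2 : IsOpen S2 := op _ (hcf.mul continuousOn_id)
    have o3 : IsOpen S3 := op _ hcf
    have m1 : ∀ x, x ∈ S1 ↔ x ∈ s ∧ u x t ≠ x := by
      intro x
      simp only [hS1, Set.mem_inter_iff, Set.mem_preimage, Set.mem_compl_iff,
        Set.mem_singleton_iff]
      constructor
      · rintro ⟨hx, hne'⟩; exact ⟨hx, fun he => hne' (by rw [he]; ring)⟩
      · rintro ⟨hx, hne'⟩; exact ⟨hx, fun he => hne' (by linarith)⟩
    have m2 : ∀ x, x ∈ S2 ↔ x ∈ s ∧ u x t * x ≠ 1 := by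
      intro x
      simp only [hS2, Set.mem_inter_iff, Set.mem_preimage, Set.mem_compl_iff,
        Set.mem_singleton_iff]
    have m3 : ∀ x, x ∈ S3 ↔ x ∈ s ∧ u x t ≠ 1 := by
      intro x
      simp only [hS3, Set.mem_inter_iff, Set.mem_preimage, Set.mem_compl_iff,
        Set.mem_singleton_iff]
    set A : Set ℝ := S2 ∩ S3 with hA
    set B : Set ℝ := S1 ∩ S3 with hB
    set C : Set ℝ := S1 ∩ S2 with hC
    have mA : ∀ x ∈ s, (x ∈ A ↔ u x t = x) := by
      intro x hx
      constructor
      · rintro ⟨h2, h3⟩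
        rcases tri x t (hx0 x hx) with h' | h' | h'
        · exact h'
        · exact absurd h' ((m2 x).mp h2).2
        · exact absurd h' ((m3 x).mp h3).2
      · intro h'
        have hx1' := hx1 x hx
        have hxp := hx0 x hx
        refine ⟨(m2 x).mpr ⟨hx, ?_⟩, (m3 x).mpr ⟨hx, ?_⟩⟩
        · rw [h']; intro he; exact hx1' (by nlinarith)
        · rw [h']; exact hx1'
    have mB : ∀ x ∈ s, (x ∈ B ↔ u x t * x = 1) := by
      intro x hx
      constructor
      · rintro ⟨h1', h3⟩
        rcases tri x t (hx0 x hx) with h' | h' | h'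
        · exact absurd h' ((m1 x).mp h1').2
        · exact h'
        · exact absurd h' ((m3 x).mp h3).2
      · intro h'
        have hx1' := hx1 x hx
        have hxp := hx0 x hx
        refine ⟨(m1 x).mpr ⟨hx, ?_⟩, (m3 x).mpr ⟨hx, ?_⟩⟩
        · intro he; rw [he] at h'; exact hx1' (by nlinarith)
        · intro he; rw [he, one_mul] at h'; exact hx1' h'
    have mC : ∀ x ∈ s, (x ∈ C ↔ u x t = 1) := by
      intro x hx
      constructor
      · rintro ⟨h1', h2⟩
        rcases tri x t (hx0 x hx) with h' | h' | h'
        · exact absurd h' ((m1 x).mp h1').2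
        · exact absurd h' ((m2 x).mp h2).2
        · exact h'
      · intro h'
        have hx1' := hx1 x hx
        have hxp := hx0 x hx
        refine ⟨(m1 x).mpr ⟨hx, ?_⟩, (m2 x).mpr ⟨hx, ?_⟩⟩
        · rw [h']; exact fun he => hx1' he.symm
        · rw [h', one_mul]; exact hx1'
    have cover : s ⊆ A ∪ (B ∪ C) := by
      intro x hx
      rcases tri x t (hx0 x hx) with h' | h' | h'
      · exact Or.inl ((mA x hx).mpr h')
      · exact Or.inr (Or.inl ((mB x hx).mpr h'))
      · exact Or.inr (Or.inr ((mC x hx).mpr h'))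
    have hrBC : r ∈ B ∪ C := by
      rcases cover hrs with h' | h'
      · exact absurd ((mA r hrs).mp h') hne
      · exact h'
    -- first application of preconnectedness
    by_cases hAne : (s ∩ A).Nonempty
    · obtain ⟨x, hxs, hxA, hxBC⟩ := hsc A (B ∪ C) (o2.inter o3) ((o1.inter o3).union (o1.inter o2))
        cover hAne ⟨r, hrs, hrBC⟩
      have hux := (mA x hxs).mp hxA
      rcases hxBC with h' | h'
      · exact ((m1 x).mp h'.1).2 hux
      · exact ((m1 x).mp h'.1).2 hux
    · have hsub2 : s ⊆ B ∪ C := fun x hx =>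
        (cover hx).resolve_left fun hxA => hAne ⟨x, hx, hxA⟩
      have hBC : (∀ x ∈ s, u x t * x = 1) ∨ (∀ x ∈ s, u x t = 1) := by
        by_cases hBne : (s ∩ B).Nonempty
        · by_cases hCne : (s ∩ C).Nonempty
          · obtain ⟨x, hxs, hxB, hxC⟩ := hsc B C (o1.inter o3) (o1.inter o2) hsub2 hBne hCne
            exact absurd ((mC x hxs).mp hxC) ((m3 x).mp hxB.2).2
          · left
            intro x hx
            rcases hsub2 hx with h' | h'
            · exact (mB x hx).mp h'
            · exact absurd ⟨x, hx, h'⟩ hCne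
        · right
          intro x hx
          rcases hsub2 hx with h' | h'
          · exact absurd ⟨x, hx, h'⟩ hBne
          · exact (mC x hx).mp h'
      have hr1 := hx1 r hrs
      rcases hBC with hval | hval
      · -- u x t = x⁻¹ on s : contradiction via derivative
        have hval' : ∀ x ∈ s, u x t = x⁻¹ := by
          intro x hx
          have hxne : x ≠ 0 := ne_of_gt (hx0 x hx)
          field_simp
          exact hval x hx
        have hev : (fun x => u x t) =ᶠ[nhds r] fun x => x⁻¹ := by
          filter_upwards [hso.mem_nhds hrs] with x hx using hval' x hx
        have hd := (hasDerivAt_inv (ne_of_gt hrpos)).congr_of_eventuallyEq hev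
        have haval : u_r r t = -(r ^ 2)⁻¹ := (hur r t hrpos).unique hd
        have hane : u_r r t ≠ 0 := by
          rw [haval]
          have h0 : (0 : ℝ) < (r ^ 2)⁻¹ := by positivity
          exact neg_ne_zero.mpr (ne_of_gt h0)
        have huv := hval' r hrs
        by_cases hb : u_t r t = 0
        · have := keyA r t hrpos hb
          rw [huv] at this
          have : r = 1 := by
            have hrne : r ≠ 0 := ne_of_gt hrpos
            field_simp at this
            nlinarith
          exact hr1 this
        · have := keyD r t hrpos hane hb
          rw [huv] at this
          exact hr1 (by rwa [inv_eq_one] at this)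
      · -- u x t = 1 on s : contradiction via derivative
        have hev : (fun x => u x t) =ᶠ[nhds r] fun _ => (1 : ℝ) := by
          filter_upwards [hso.mem_nhds hrs] with x hx using hval x hx
        have hd := (hasDerivAt_const r (1 : ℝ)).congr_of_eventuallyEq hev
        have ha0 : u_r r t = 0 := (hur r t hrpos).unique hd
        have := keyB r t hrpos ha0
        rw [hval r hrs, one_mul] at this
        exact hr1 this
  -- conclusion: u r t = r for all r > 0
  have main : ∀ r t : ℝ, 0 < r → u r t = r := by
    have s1 : ∀ t : ℝ, ∀ r ∈ Set.Ioo (0 : ℝ) 1, u r t = r := fun t =>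
      slice t (Set.Ioo 0 1) isOpen_Ioo isPreconnected_Ioo
        (fun x hx => ⟨hx.1, ne_of_lt hx.2⟩)
    have s2 : ∀ t : ℝ, ∀ r ∈ Set.Ioi (1 : ℝ), u r t = r := fun t =>
      slice t (Set.Ioi 1) isOpen_Ioi isPreconnected_Ioi
        (fun x hx => ⟨lt_trans one_pos hx, ne_of_gt hx⟩)
    intro r t hr
    rcases lt_trichotomy r 1 with h1 | h1 | h1
    · exact s1 t r ⟨hr, h1⟩
    · subst h1
      have hca : ContinuousAt (fun x => u x t) 1 := (hur 1 t one_pos).continuousAt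
      have t1 : Filter.Tendsto (fun x => u x t) (nhdsWithin 1 (Set.Iio 1))
          (nhds (u 1 t)) := hca.continuousWithinAt.tendsto
      have hmem : Set.Ioo (0 : ℝ) 1 ∈ nhdsWithin (1 : ℝ) (Set.Iio 1) :=
        Ioo_mem_nhdsLT_of_mem ⟨one_pos, le_refl 1⟩
      have t2 : Filter.Tendsto (fun x => u x t) (nhdsWithin 1 (Set.Iio 1)) (nhds 1) := by
        have hid : Filter.Tendsto (fun x : ℝ => x) (nhdsWithin 1 (Set.Iio 1)) (nhds 1) :=
          Filter.tendsto_id.mono_left nhdsWithin_le_nhds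
        refine hid.congr' ?_
        filter_upwards [hmem] with x hx using (s1 t x hx).symm
      exact tendsto_nhds_unique t1 t2
    · exact s2 t r h1
  -- derivatives of v
  have hvt1 : ∀ r t : ℝ, 0 < r → v_t r t = 1 := by
    intro r t hr
    have hk := hpos r hr
    have ha1 : u_r r t = 1 := by
      have hev : (fun x => u x t) =ᶠ[nhds r] fun x => x := by
        filter_upwards [isOpen_Ioi.mem_nhds (by exact hr : r ∈ Set.Ioi (0 : ℝ))] with x hx
          using main x t hx
      exact (hur r t hr).unique ((hasDerivAt_id r).congr_of_eventuallyEq hev)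
    have e1 := hCR1 r t hr
    rw [main r t hr, ha1, one_mul] at e1
    exact mul_right_cancel₀ (ne_of_gt hk) (by linarith [e1] : v_t r t * h r = 1 * h r)
  have hvr0 : ∀ r t : ℝ, 0 < r → v_r r t = 0 := by
    intro r t hr
    have hk := hpos r hr
    have hH := hpos _ (hmaps r t hr)
    have hb : u_t r t = 0 := by
      have hfun : (fun y => u r y) = fun _ => r := funext fun y => main r y hr
      have h2 := hut r t hr
      rw [hfun] at h2
      exact h2.unique (hasDerivAt_const t r)
    have h2 := hCR2 r t hr
    rw [hb] at h2
    rcases mul_eq_zero.mp h2.symm with h3 | h3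
    · exact absurd h3 (by nlinarith)
    · exact h3
  refine ⟨v 1 0, fun r t hr => ⟨main r t hr, ?_⟩⟩
  -- v r t = t + v r 0
  have hg : ∀ y : ℝ, HasDerivAt (fun y => v r y - y) 0 y := by
    intro y
    have := (hvt r y hr).sub (hasDerivAt_id y)
    rwa [hvt1 r y hr, sub_self] at this
  have hconst : v r t - t = v r 0 - 0 :=
    is_const_of_deriv_eq_zero (fun y => (hg y).differentiableAt)
      (fun y => (hg y).deriv) t 0
  -- v r 0 = v 1 0
  have hlip : ‖v r 0 - v 1 0‖ ≤ 0 * ‖r - 1‖ :=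
    Convex.norm_image_sub_le_of_norm_hasDerivWithin_le
      (f := fun x => v x 0) (f' := fun x => v_r x 0) (s := Set.Ioi 0)
      (fun x hx => (hvr x 0 hx).hasDerivWithinAt)
      (fun x hx => by show ‖v_r x 0‖ ≤ 0; rw [hvr0 x 0 hx]; simp)
      (convex_Ioi 0) (by norm_num) (by exact hr)
  have hv10 : v r 0 = v 1 0 := by
    rw [zero_mul] at hlip
    have := norm_le_zero_iff.mp hlip
    linarith [sub_eq_zero.mp this]
  linarith [hconst, hv10]
end

section
/- In (ℛ, ds₁²), two distinct points (r₀, t₀) and (r₁, t₁) with |t₁ − t₀| ≥ π cannot be joined by any geodesic of the family γ_a(s) = (√(s² + 2as + r₀²), ± arctan(s√(r₀² − a²)/(r₀² + as)) + t₀), a ∈ (−r₀, r₀): the equation ±arctan(s√(r₀²−a²)/(r₀²+as)) = t₁ − t₀ has no solution since |arctan x| < π/2. -/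
open Real in
/-- In `(ℛ, ds₁²)`, two points `(r₀,t₀)`, `(r₁,t₁)` with `|t₁ − t₀| ≥ π` cannot be
joined by any geodesic of the family
`γ_a(s) = (√(s² + 2as + r₀²), ±arctan(s√(r₀²−a²)/(r₀²+as)) + t₀)`, `a ∈ (−r₀,r₀)`,
since `|arctan x| < π/2`. -/
theorem stmt_15 (r₀ t₀ r₁ t₁ : ℝ) (hr₀ : 0 < r₀) (hr₁ : 0 < r₁)
    (hdist : |t₁ - t₀| ≥ π) :
    ¬ ∃ a ∈ Set.Ioo (-r₀) r₀, ∃ s ε : ℝ, (ε = 1 ∨ ε = -1) ∧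
      Real.sqrt (s ^ 2 + 2 * a * s + r₀ ^ 2) = r₁ ∧
      ε * Real.arctan (s * Real.sqrt (r₀ ^ 2 - a ^ 2) / (r₀ ^ 2 + a * s)) + t₀ = t₁ := by
  rintro ⟨a, ha, s, ε, hε, hr, ht⟩
  have h1 : t₁ - t₀ = ε * Real.arctan (s * Real.sqrt (r₀ ^ 2 - a ^ 2) / (r₀ ^ 2 + a * s)) := by
    linarith
  have h2 : |t₁ - t₀| < π / 2 := by
    rw [h1, abs_mul]
    have : |ε| = 1 := by rcases hε with h | h <;> simp [h]
    rw [this, one_mul]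
    exact abs_lt.mpr ⟨Real.neg_pi_div_two_lt_arctan _, Real.arctan_lt_pi_div_two _⟩
  linarith [Real.pi_pos]
end
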